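/- arXiv:1711.10111 — 2 statements merged into one kernel-verified Lean document; each statement's English description precedes it below -/
import Mathlib

section
/- Let α, β > 0 be fixed and c ∈ (0,1). Then lim_{S→∞} ∫_0^1 f(x; α, β) · I_x(cS+1, (1−c)S+1) dx = ∫_c^1 f(x; α, β) dx = 1 − I_c(α,β), and this limit is strictly positive. (Case 3 of the proof of Lemma 3: if only one action's observation count tends to infinity, the probability that the finitely-sampled action's estimate exceeds the infinitely-sampled one converges to the positive mass that its Beta density places above c, so it cannot tend to zero.) -/
/-!
The Beta(cS+1, (1-c)S+1) kernel is `g(t)^S` with `g(t) = t^c (1-t)^(1-c)`, which increases on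
`[0,c]` and decreases on `[c,1]`. On an interval avoiding `c`, `g` is therefore bounded by some
`M` smaller than its minimum `m` on a short interval next to `c`, so that interval's share of the
total mass is `O((M/m)^S)`: the CDF `I_x(cS+1, (1-c)S+1)` tends to `0` for `x < c` and to `1` for
`x > c`. Dominated convergence, with the Beta(α,β) density as dominating function, gives the limit
`∫_c^1 f(x;α,β) dx = 1 - I_c(α,β)`, which is positive since the density is positive on `(c,1)`.
-/

open MeasureTheory Real Filter Set

/-- The Beta function `B(a,b) = ∫₀¹ t^(a-1) (1-t)^(b-1) dt`. -/
noncomputable def betaFn (a b : ℝ) : ℝ :=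
  ∫ t in (0:ℝ)..1, t ^ (a - 1) * (1 - t) ^ (b - 1)

/-- The Beta(a,b) probability density on `[0,1]`. -/
noncomputable def betaPdf (a b : ℝ) (x : ℝ) : ℝ :=
  x ^ (a - 1) * (1 - x) ^ (b - 1) / betaFn a b

/-- The cumulative distribution function of Beta(a,b). -/
noncomputable def betaCdf (a b : ℝ) (x : ℝ) : ℝ :=
  (∫ t in (0:ℝ)..x, t ^ (a - 1) * (1 - t) ^ (b - 1)) / betaFn a b

open Topology intervalIntegral

noncomputable def betaKernel (a b t : ℝ) : ℝ :=
  t ^ (a - 1) * (1 - t) ^ (b - 1)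

section BetaKernel

variable {a b : ℝ}

lemma betaKernel_nonneg {t : ℝ} (ht : t ∈ Icc (0 : ℝ) 1) : 0 ≤ betaKernel a b t :=
  mul_nonneg (rpow_nonneg ht.1 _) (rpow_nonneg (sub_nonneg.2 ht.2) _)

lemma betaKernel_pos {t : ℝ} (ht : t ∈ Ioo (0 : ℝ) 1) : 0 < betaKernel a b t :=
  mul_pos (rpow_pos_of_pos ht.1 _) (rpow_pos_of_pos (sub_pos.2 ht.2) _)

lemma intervalIntegrable_betaKernel (ha : 0 < a) (hb : 0 < b) :
    IntervalIntegrable (betaKernel a b) volume 0 1 := by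
  refine (Complex.betaIntegral_convergent (u := a) (v := b) (by simpa) (by simpa)).norm.congr_uIoo
    fun t ht => ?_
  rw [uIoo_of_le zero_le_one] at ht
  have h1t : 0 < 1 - t := sub_pos.2 ht.2
  simp only [norm_mul]
  rw [show 1 - (t : ℂ) = ((1 - t : ℝ) : ℂ) by push_cast; rfl,
    Complex.norm_cpow_eq_rpow_re_of_pos ht.1, Complex.norm_cpow_eq_rpow_re_of_pos h1t]
  simp [betaKernel]

lemma intervalIntegrable_betaKernel_of_mem (ha : 0 < a) (hb : 0 < b) {x y : ℝ}
    (hx : x ∈ Icc (0 : ℝ) 1) (hy : y ∈ Icc (0 : ℝ) 1) :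
    IntervalIntegrable (betaKernel a b) volume x y :=
  (intervalIntegrable_betaKernel ha hb).mono_set <| by
    rw [uIcc_of_le zero_le_one]
    exact uIcc_subset_Icc hx hy

lemma betaFn_eq_integral_betaKernel : betaFn a b = ∫ t in (0 : ℝ)..1, betaKernel a b t := rfl

lemma betaCdf_eq_integral_betaKernel (x : ℝ) :
    betaCdf a b x = (∫ t in (0 : ℝ)..x, betaKernel a b t) / betaFn a b := rfl

lemma betaFn_pos (ha : 0 < a) (hb : 0 < b) : 0 < betaFn a b :=
  intervalIntegral_pos_of_pos_on (intervalIntegrable_betaKernel ha hb)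
    (fun _ ht => betaKernel_pos ht) zero_lt_one

lemma one_sub_betaCdf (ha : 0 < a) (hb : 0 < b) {x : ℝ} (hx : x ∈ Icc (0 : ℝ) 1) :
    1 - betaCdf a b x = (∫ t in x..1, betaKernel a b t) / betaFn a b := by
  have hsplit : (∫ t in (0 : ℝ)..x, betaKernel a b t) + ∫ t in x..1, betaKernel a b t
      = betaFn a b :=
    integral_add_adjacent_intervals
      (intervalIntegrable_betaKernel_of_mem ha hb (left_mem_Icc.2 zero_le_one) hx)
      (intervalIntegrable_betaKernel_of_mem ha hb hx (right_mem_Icc.2 zero_le_one))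
  rw [betaCdf_eq_integral_betaKernel, eq_div_iff (betaFn_pos ha hb).ne', sub_mul,
    div_mul_cancel₀ _ (betaFn_pos ha hb).ne']
  linarith

lemma betaCdf_nonneg (ha : 0 < a) (hb : 0 < b) {x : ℝ} (hx : x ∈ Icc (0 : ℝ) 1) :
    0 ≤ betaCdf a b x :=
  div_nonneg (integral_nonneg hx.1 fun _ ht => betaKernel_nonneg ⟨ht.1, ht.2.trans hx.2⟩)
    (betaFn_pos ha hb).le

lemma betaCdf_le_one (ha : 0 < a) (hb : 0 < b) {x : ℝ} (hx : x ∈ Icc (0 : ℝ) 1) :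
    betaCdf a b x ≤ 1 := by
  have := one_sub_betaCdf ha hb hx
  have : 0 ≤ (∫ t in x..1, betaKernel a b t) / betaFn a b :=
    div_nonneg (integral_nonneg hx.2 fun _ ht => betaKernel_nonneg ⟨hx.1.trans ht.1, ht.2⟩)
      (betaFn_pos ha hb).le
  linarith

lemma continuousOn_betaCdf (ha : 0 < a) (hb : 0 < b) : ContinuousOn (betaCdf a b) (Icc 0 1) := by
  have h := continuousOn_primitive_interval' (intervalIntegrable_betaKernel ha hb)
    (left_mem_uIcc (b := 1))
  rw [uIcc_of_le zero_le_one] at h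
  exact h.div_const _

lemma integral_betaPdf (ha : 0 < a) (hb : 0 < b) {x : ℝ} (hx : x ∈ Icc (0 : ℝ) 1) :
    ∫ t in x..1, betaPdf a b t = 1 - betaCdf a b x := by
  rw [one_sub_betaCdf ha hb hx, ← intervalIntegral.integral_div]
  rfl

lemma integral_betaPdf_pos (ha : 0 < a) (hb : 0 < b) {x : ℝ} (hx0 : 0 ≤ x) (hx1 : x < 1) :
    0 < ∫ t in x..1, betaPdf a b t :=
  intervalIntegral_pos_of_pos_on
    ((intervalIntegrable_betaKernel_of_mem ha hb ⟨hx0, hx1.le⟩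
      (right_mem_Icc.2 zero_le_one)).div_const _)
    (fun _ ht => div_pos (betaKernel_pos ⟨hx0.trans_lt ht.1, ht.2⟩) (betaFn_pos ha hb)) hx1

end BetaKernel

lemma tendsto_integral_rpow_div_integral_rpow {g : ℝ → ℝ} {a b p q p' q' M m : ℝ}
    (hg_nonneg : ∀ t ∈ Icc a b, 0 ≤ g t)
    (hg_int : ∀ S : ℝ, 0 ≤ S → IntervalIntegrable (fun t => g t ^ S) volume a b)
    (hpq : p ≤ q) (hpq_sub : Icc p q ⊆ Icc a b) (hpq' : p' < q') (hpq'_sub : Icc p' q' ⊆ Icc a b)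
    (hM : ∀ t ∈ Icc p q, g t ≤ M) (hm : ∀ t ∈ Icc p' q', m ≤ g t) (hMm : M < m) :
    Tendsto (fun S : ℝ => (∫ t in p..q, g t ^ S) / ∫ t in a..b, g t ^ S) atTop (𝓝 0) := by
  have hp'_mem : p' ∈ Icc a b := hpq'_sub (left_mem_Icc.2 hpq'.le)
  have hab : a ≤ b := hp'_mem.1.trans hp'_mem.2
  have hM0 : 0 ≤ M :=
    (hg_nonneg p (hpq_sub (left_mem_Icc.2 hpq))).trans (hM p (left_mem_Icc.2 hpq))
  have hm0 : 0 < m := hM0.trans_lt hMm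
  have hsub : ∀ {x y : ℝ}, x ≤ y → Icc x y ⊆ Icc a b → uIcc x y ⊆ uIcc a b := fun hxy h => by
    rwa [uIcc_of_le hxy, uIcc_of_le hab]
  have hbound : Tendsto (fun S : ℝ => (q - p) / (q' - p') * (M / m) ^ S) atTop (𝓝 0) := by
    simpa using (tendsto_rpow_atTop_of_base_lt_one _ (by linarith [div_nonneg hM0 hm0.le])
      ((div_lt_one hm0).2 hMm)).const_mul ((q - p) / (q' - p'))
  refine squeeze_zero' ?_ ?_ hbound <;> filter_upwards [eventually_ge_atTop 0] with S hS
  · exact div_nonneg (integral_nonneg hpq fun t ht => rpow_nonneg (hg_nonneg t (hpq_sub ht)) S)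
      (integral_nonneg hab fun t ht => rpow_nonneg (hg_nonneg t ht) S)
  have hnum : (∫ t in p..q, g t ^ S) ≤ (q - p) * M ^ S := by
    simpa using integral_mono_on hpq ((hg_int S hS).mono_set (hsub hpq hpq_sub))
      intervalIntegrable_const
      fun t ht => rpow_le_rpow (hg_nonneg t (hpq_sub ht)) (hM t ht) hS
  have hden : (q' - p') * m ^ S ≤ ∫ t in a..b, g t ^ S :=
    calc (q' - p') * m ^ S ≤ ∫ t in p'..q', g t ^ S := by
          simpa using integral_mono_on hpq'.le intervalIntegrable_const
            ((hg_int S hS).mono_set (hsub hpq'.le hpq'_sub))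
            fun t ht => rpow_le_rpow hm0.le (hm t ht) hS
      _ ≤ ∫ t in a..b, g t ^ S :=
          integral_mono_interval hp'_mem.1 hpq'.le
            (hpq'_sub (right_mem_Icc.2 hpq'.le)).2
            ((ae_restrict_mem measurableSet_Ioc).mono fun t ht =>
              rpow_nonneg (hg_nonneg t (Ioc_subset_Icc_self ht)) S)
            (hg_int S hS)
  calc (∫ t in p..q, g t ^ S) / ∫ t in a..b, g t ^ S
      ≤ (q - p) * M ^ S / ((q' - p') * m ^ S) :=
        div_le_div₀ (mul_nonneg (sub_nonneg.2 hpq) (rpow_nonneg hM0 S)) hnum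
          (mul_pos (sub_pos.2 hpq') (rpow_pos_of_pos hm0 S)) hden
    _ = (q - p) / (q' - p') * (M / m) ^ S := by
        rw [div_rpow hM0 hm0.le]; field_simp

noncomputable def bernoulliLikelihood (c t : ℝ) : ℝ :=
  t ^ c * (1 - t) ^ (1 - c)

section Concentration

variable {c : ℝ}

lemma betaKernel_eq_bernoulliLikelihood_rpow (S : ℝ) :
    EqOn (betaKernel (c * S + 1) ((1 - c) * S + 1)) (fun t => bernoulliLikelihood c t ^ S)
      (Icc 0 1) := fun t ht => by
  have h1t : 0 ≤ 1 - t := sub_nonneg.2 ht.2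
  simp only [betaKernel, bernoulliLikelihood]
  rw [add_sub_cancel_right, add_sub_cancel_right,
    mul_rpow (rpow_nonneg ht.1 c) (rpow_nonneg h1t _), ← rpow_mul ht.1, ← rpow_mul h1t]

lemma continuous_bernoulliLikelihood (hc0 : 0 ≤ c) (hc1 : c ≤ 1) :
    Continuous (bernoulliLikelihood c) :=
  ((continuous_id.rpow_const fun _ => Or.inr hc0).mul
    ((continuous_const.sub continuous_id).rpow_const fun _ => Or.inr (sub_nonneg.2 hc1)))

lemma hasDerivAt_bernoulliLikelihood {t : ℝ} (ht : t ∈ Ioo (0 : ℝ) 1) :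
    HasDerivAt (bernoulliLikelihood c) (t ^ (c - 1) * (1 - t) ^ (-c) * (c - t)) t := by
  have h1t : 1 - t ≠ 0 := (sub_pos.2 ht.2).ne'
  have h := (hasDerivAt_rpow_const (p := c) (Or.inl ht.1.ne')).mul
    ((hasDerivAt_rpow_const (p := 1 - c) (Or.inl h1t)).comp t ((hasDerivAt_id t).const_sub 1))
  refine h.congr_deriv ?_
  have e1 : t ^ c = t ^ (c - 1) * t := by rw [← rpow_add_one ht.1.ne']; ring_nf
  have e2 : (1 - t) ^ (1 - c) = (1 - t) ^ (-c) * (1 - t) := by rw [← rpow_add_one h1t]; ring_nf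
  simp only [Function.comp_apply]
  rw [e1, e2, show 1 - c - 1 = -c by ring]
  ring

lemma strictMonoOn_bernoulliLikelihood (hc0 : 0 ≤ c) (hc1 : c ≤ 1) :
    StrictMonoOn (bernoulliLikelihood c) (Icc 0 c) := by
  refine strictMonoOn_of_deriv_pos (convex_Icc 0 c)
    (continuous_bernoulliLikelihood hc0 hc1).continuousOn fun t ht => ?_
  rw [interior_Icc] at ht
  rw [(hasDerivAt_bernoulliLikelihood ⟨ht.1, ht.2.trans_le hc1⟩).deriv]
  exact mul_pos (mul_pos (rpow_pos_of_pos ht.1 _) (rpow_pos_of_pos (by linarith [ht.2]) _))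
    (sub_pos.2 ht.2)

lemma strictAntiOn_bernoulliLikelihood (hc0 : 0 ≤ c) (hc1 : c ≤ 1) :
    StrictAntiOn (bernoulliLikelihood c) (Icc c 1) := by
  refine strictAntiOn_of_deriv_neg (convex_Icc c 1)
    (continuous_bernoulliLikelihood hc0 hc1).continuousOn fun t ht => ?_
  rw [interior_Icc] at ht
  rw [(hasDerivAt_bernoulliLikelihood ⟨hc0.trans_lt ht.1, ht.2⟩).deriv]
  exact mul_neg_of_pos_of_neg
    (mul_pos (rpow_pos_of_pos (hc0.trans_lt ht.1) _) (rpow_pos_of_pos (sub_pos.2 ht.2) _))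
    (sub_neg.2 ht.1)

lemma tendsto_integral_betaKernel_div_betaFn (hc0 : 0 ≤ c) (hc1 : c ≤ 1) {p q : ℝ}
    (hpq : p ≤ q) (hsub : Icc p q ⊆ Icc 0 1) (hc : c ∉ Icc p q) :
    Tendsto (fun S : ℝ => (∫ t in p..q, betaKernel (c * S + 1) ((1 - c) * S + 1) t) /
      betaFn (c * S + 1) ((1 - c) * S + 1)) atTop (𝓝 0) := by
  set g := bernoulliLikelihood c
  have hg_nonneg : ∀ t ∈ Icc (0 : ℝ) 1, 0 ≤ g t := fun t ht =>
    mul_nonneg (rpow_nonneg ht.1 _) (rpow_nonneg (sub_nonneg.2 ht.2) _)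
  have hparams : ∀ S : ℝ, 0 ≤ S → 0 < c * S + 1 ∧ 0 < (1 - c) * S + 1 := fun S hS =>
    ⟨by nlinarith, by nlinarith⟩
  have hg_int : ∀ S : ℝ, 0 ≤ S → IntervalIntegrable (fun t => g t ^ S) volume 0 1 :=
    fun S hS => (intervalIntegrable_betaKernel (hparams S hS).1 (hparams S hS).2).congr <|
      (betaKernel_eq_bernoulliLikelihood_rpow S).mono <| by
        rw [uIoc_of_le zero_le_one]; exact Ioc_subset_Icc_self
  have key : Tendsto (fun S : ℝ => (∫ t in p..q, g t ^ S) / ∫ t in (0 : ℝ)..1, g t ^ S)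
      atTop (𝓝 0) := by
    rcases (not_and_or.1 hc).imp not_le.1 not_le.1 with hcp | hqc
    · have hanti := strictAntiOn_bernoulliLikelihood hc0 hc1
      have hp1 : p ≤ 1 := (hsub (left_mem_Icc.2 hpq)).2
      have hq1 : q ≤ 1 := (hsub (right_mem_Icc.2 hpq)).2
      refine tendsto_integral_rpow_div_integral_rpow hg_nonneg hg_int hpq hsub
        (p' := c) (q' := (c + p) / 2) (by linarith) (Icc_subset_Icc hc0 (by linarith))
        (M := g p) (m := g ((c + p) / 2)) (fun t ht => ?_) (fun t ht => ?_) ?_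
      · exact (hanti.le_iff_ge ⟨hcp.le.trans ht.1, ht.2.trans hq1⟩ ⟨hcp.le, hp1⟩).2 ht.1
      · exact (hanti.le_iff_ge ⟨by linarith, by linarith⟩ ⟨ht.1, by linarith [ht.2]⟩).2 ht.2
      · exact hanti ⟨by linarith, by linarith⟩ ⟨hcp.le, hp1⟩ (by linarith)
    · have hmono := strictMonoOn_bernoulliLikelihood hc0 hc1
      have hp0 : 0 ≤ p := (hsub (left_mem_Icc.2 hpq)).1
      refine tendsto_integral_rpow_div_integral_rpow hg_nonneg hg_int hpq hsub
        (p' := (q + c) / 2) (q' := c) (by linarith) (Icc_subset_Icc (by linarith) hc1)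
        (M := g q) (m := g ((q + c) / 2)) (fun t ht => ?_) (fun t ht => ?_) ?_
      · exact (hmono.le_iff_le ⟨hp0.trans ht.1, ht.2.trans hqc.le⟩ ⟨hp0.trans hpq, hqc.le⟩).2 ht.2
      · exact (hmono.le_iff_le ⟨by linarith, by linarith⟩ ⟨by linarith [ht.1], ht.2⟩).2 ht.1
      · exact hmono ⟨hp0.trans hpq, hqc.le⟩ ⟨by linarith, by linarith⟩ (by linarith)
  refine key.congr' ?_
  filter_upwards [eventually_ge_atTop 0] with S _
  rw [betaFn_eq_integral_betaKernel,
    integral_congr ((betaKernel_eq_bernoulliLikelihood_rpow S).mono (by rwa [uIcc_of_le hpq])),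
    integral_congr ((betaKernel_eq_bernoulliLikelihood_rpow S).mono
      (by rw [uIcc_of_le zero_le_one]))]

lemma tendsto_betaCdf_of_lt (hc0 : 0 ≤ c) (hc1 : c ≤ 1) {x : ℝ} (hx0 : 0 ≤ x) (hxc : x < c) :
    Tendsto (fun S : ℝ => betaCdf (c * S + 1) ((1 - c) * S + 1) x) atTop (𝓝 0) :=
  tendsto_integral_betaKernel_div_betaFn hc0 hc1 hx0 (Icc_subset_Icc le_rfl (by linarith))
    fun h => hxc.not_ge h.2

lemma tendsto_betaCdf_of_gt (hc0 : 0 ≤ c) (hc1 : c ≤ 1) {x : ℝ} (hcx : c < x) (hx1 : x ≤ 1) :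
    Tendsto (fun S : ℝ => betaCdf (c * S + 1) ((1 - c) * S + 1) x) atTop (𝓝 1) := by
  have h := tendsto_integral_betaKernel_div_betaFn hc0 hc1 hx1
    (Icc_subset_Icc (hc0.trans hcx.le) le_rfl) fun h => hcx.not_ge h.1
  have h' : Tendsto (fun S : ℝ => 1 - (∫ t in x..1, betaKernel (c * S + 1) ((1 - c) * S + 1) t) /
      betaFn (c * S + 1) ((1 - c) * S + 1)) atTop (𝓝 1) := by
    simpa using h.const_sub 1
  refine h'.congr' ?_
  filter_upwards [eventually_ge_atTop 0] with S hS
  rw [← one_sub_betaCdf (by nlinarith) (by nlinarith) ⟨hc0.trans hcx.le, hx1⟩, sub_sub_cancel]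

end Concentration

lemma tendsto_integral_betaPdf_mul_betaCdf {α β c : ℝ} (hα : 0 < α) (hβ : 0 < β)
    (hc0 : 0 ≤ c) (hc1 : c ≤ 1) :
    Tendsto (fun S : ℝ =>
        ∫ x in (0 : ℝ)..1, betaPdf α β x * betaCdf (c * S + 1) ((1 - c) * S + 1) x)
      atTop (𝓝 (∫ x in c..1, betaPdf α β x)) := by
  have hpdf_nonneg : ∀ x ∈ Icc (0 : ℝ) 1, 0 ≤ betaPdf α β x := fun _ hx =>
    div_nonneg (betaKernel_nonneg hx) (betaFn_pos hα hβ).le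
  have hparams : ∀ᶠ S : ℝ in atTop, 0 < c * S + 1 ∧ 0 < (1 - c) * S + 1 := by
    filter_upwards [eventually_ge_atTop 0] with S hS
    exact ⟨by nlinarith, by nlinarith⟩
  have hlim :
      ∫ x in c..1, betaPdf α β x = ∫ x in (0 : ℝ)..1, (Ioi c).indicator (betaPdf α β) x := by
    rw [integral_of_le hc1, integral_of_le zero_le_one, setIntegral_indicator measurableSet_Ioi,
      Ioc_inter_Ioi, max_eq_right hc0]
  rw [hlim]
  refine tendsto_integral_filter_of_dominated_convergence (betaPdf α β) ?_ ?_
    ((intervalIntegrable_betaKernel hα hβ).div_const _) ?_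
  · filter_upwards [hparams] with S ⟨ha, hb⟩
    rw [uIoc_of_le zero_le_one]
    exact (Measurable.aestronglyMeasurable (by unfold betaPdf; fun_prop)).mul
      (((continuousOn_betaCdf ha hb).mono Ioc_subset_Icc_self).aestronglyMeasurable
        measurableSet_Ioc)
  · filter_upwards [hparams] with S ⟨ha, hb⟩
    refine ae_of_all _ fun x hx => ?_
    rw [uIoc_of_le zero_le_one] at hx
    have hx' : x ∈ Icc (0 : ℝ) 1 := Ioc_subset_Icc_self hx
    rw [norm_mul, norm_of_nonneg (hpdf_nonneg x hx'), norm_of_nonneg (betaCdf_nonneg ha hb hx')]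
    exact mul_le_of_le_one_right (hpdf_nonneg x hx') (betaCdf_le_one ha hb hx')
  · filter_upwards [Measure.ae_ne volume c] with x hx_ne hx
    rw [uIoc_of_le zero_le_one] at hx
    rcases hx_ne.lt_or_gt with hxc | hcx
    · rw [indicator_of_notMem (notMem_Ioi.2 hxc.le)]
      simpa using (tendsto_betaCdf_of_lt hc0 hc1 hx.1.le hxc).const_mul (betaPdf α β x)
    · rw [indicator_of_mem (mem_Ioi.2 hcx)]
      simpa using (tendsto_betaCdf_of_gt hc0 hc1 hcx hx.2).const_mul (betaPdf α β x)

/-- When one action's observation count tends to infinity while the other's stays fixed,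
the probability that the finitely-sampled Beta(α,β) estimate exceeds the concentrating one
converges to `∫_c^1 f(x;α,β) dx = 1 - I_c(α,β) > 0`. -/
theorem finite_vs_concentrating (α β c : ℝ) (hα : 0 < α) (hβ : 0 < β)
    (hc0 : 0 < c) (hc1 : c < 1) :
    Tendsto (fun S : ℝ =>
        ∫ x in (0:ℝ)..1, betaPdf α β x * betaCdf (c * S + 1) ((1 - c) * S + 1) x)
      atTop (nhds (∫ x in c..1, betaPdf α β x)) ∧
    (∫ x in c..1, betaPdf α β x) = 1 - betaCdf α β c ∧
    0 < ∫ x in c..1, betaPdf α β x :=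
  ⟨tendsto_integral_betaPdf_mul_betaCdf hα hβ hc0.le hc1.le,
    integral_betaPdf hα hβ ⟨hc0.le, hc1.le⟩, integral_betaPdf_pos hα hβ hc0.le hc1⟩
end

section
/- Let α_1, β_1, α_2, β_2 be positive integers. Then the probability that an independent Beta(α_1,β_1) sample exceeds an independent Beta(α_2,β_2) sample satisfies ∫_0^1 f(x; α_1, β_1) I_x(α_2, β_2) dx = Σ_{i=0}^{β_2−1} B(β_1+i, α_1+α_2) / ( (α_2+i) · B(1+i, α_2) · B(α_1, β_1) ). -/
open MeasureTheory Real Set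

/-- `g(α₁,β₁,α₂,β₂)`: the probability that an independent Beta(α₁,β₁) sample exceeds an
independent Beta(α₂,β₂) sample. -/
noncomputable def probG (a₁ b₁ a₂ b₂ : ℝ) : ℝ :=
  ∫ x in (0:ℝ)..1, betaPdf a₁ b₁ x * betaCdf a₂ b₂ x

/-- `h(α₁,β₁,α₂,β₂) = B(α₁+α₂,β₁+β₂)/(B(α₁,β₁) B(α₂,β₂))`. -/
noncomputable def probH (a₁ b₁ a₂ b₂ : ℝ) : ℝ :=
  betaFn (a₁ + a₂) (b₁ + b₂) / (betaFn a₁ b₁ * betaFn a₂ b₂)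

/-!
For integer parameters the incomplete Beta integral `J(m,n,x) = ∫₀ˣ tᵐ (1-t)ⁿ dt` is a finite sum:
`J(m,n,x) = B(m+1,n+1) ∑_{i ≤ n} x^(m+1) (1-x)^i / ((m+1+i) B(1+i,m+1))`.
This follows by induction on `n` from the integration-by-parts recurrence
`(m+n+2) J(m,n+1,x) = x^(m+1) (1-x)^(n+1) + (n+1) J(m,n,x)`, whose case `x = 1` is the
recurrence for `B`, together with the symmetry `B(a,b) = B(b,a)`. Multiplying the resulting
expansion of the Beta CDF by the Beta density and integrating term by term turns every summand
into a Beta function.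
-/

open intervalIntegral

theorem betaFn_comm (a b : ℝ) : betaFn a b = betaFn b a := by
  have h := integral_comp_sub_left (a := 0) (b := 1)
    (fun t : ℝ => t ^ (a - 1) * (1 - t) ^ (b - 1)) 1
  simp only [sub_sub_cancel, sub_zero, sub_self] at h
  rw [betaFn, betaFn, ← h]
  exact integral_congr fun t _ => mul_comm _ _

theorem betaFn_natCast_add_one (m n : ℕ) :
    betaFn (m + 1) (n + 1) = ∫ t in (0:ℝ)..1, t ^ m * (1 - t) ^ n := by
  simp only [betaFn, add_sub_cancel_right, rpow_natCast]

theorem betaFn_natCast_add_one_pos (m n : ℕ) : 0 < betaFn (m + 1) (n + 1) := by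
  rw [betaFn_natCast_add_one]
  refine intervalIntegral_pos_of_pos_on
    ((by fun_prop : Continuous fun t : ℝ => t ^ m * (1 - t) ^ n).intervalIntegrable _ _)
    (fun t ht => mul_pos (pow_pos ht.1 m) (pow_pos (sub_pos.2 ht.2) n)) one_pos

theorem integral_pow_mul_one_sub_pow_succ (m n : ℕ) (x : ℝ) :
    ((m:ℝ) + n + 2) * (∫ t in (0:ℝ)..x, t ^ m * (1 - t) ^ (n + 1)) =
      x ^ (m + 1) * (1 - x) ^ (n + 1) + (n + 1) * ∫ t in (0:ℝ)..x, t ^ m * (1 - t) ^ n := by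
  have hderiv (t : ℝ) : HasDerivAt (fun t : ℝ => t ^ (m + 1) * (1 - t) ^ (n + 1))
      (((m:ℝ) + n + 2) * (t ^ m * (1 - t) ^ (n + 1)) - (n + 1) * (t ^ m * (1 - t) ^ n)) t := by
    refine ((hasDerivAt_pow (m + 1) t).mul
      (((hasDerivAt_id t).const_sub 1).fun_pow (n + 1))).congr_deriv ?_
    simp only [Nat.add_sub_cancel, id]
    push_cast
    ring
  have hcont : ∀ k : ℕ, IntervalIntegrable (fun t : ℝ => t ^ m * (1 - t) ^ k) volume 0 x :=
    fun k => (by fun_prop : Continuous _).intervalIntegrable _ _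
  have hFTC := integral_eq_sub_of_hasDerivAt (fun t _ => hderiv t)
    (((hcont (n + 1)).const_mul _).sub ((hcont n).const_mul _))
  rw [integral_sub ((hcont (n + 1)).const_mul _) ((hcont n).const_mul _),
    intervalIntegral.integral_const_mul, intervalIntegral.integral_const_mul] at hFTC
  simp only [ne_eq, add_eq_zero, one_ne_zero, and_false, not_false_eq_true, zero_pow, zero_mul,
    sub_zero] at hFTC
  linarith

theorem betaFn_natCast_add_two (m n : ℕ) :
    ((m:ℝ) + n + 2) * betaFn (m + 1) (n + 1 + 1) = (n + 1) * betaFn (m + 1) (n + 1) := by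
  have h := integral_pow_mul_one_sub_pow_succ m n 1
  rw [← betaFn_natCast_add_one, ← Nat.cast_succ, ← betaFn_natCast_add_one] at h
  simpa using h

theorem integral_pow_mul_one_sub_pow_eq_sum (m n : ℕ) (x : ℝ) :
    ∫ t in (0:ℝ)..x, t ^ m * (1 - t) ^ n =
      betaFn (m + 1) (n + 1) * ∑ i ∈ Finset.range (n + 1),
        x ^ (m + 1) * (1 - x) ^ i / (((m:ℝ) + 1 + i) * betaFn (1 + i) (m + 1)) := by
  induction n with
  | zero =>
    have hpos := betaFn_natCast_add_one_pos m 0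
    simp only [Finset.sum_range_one, pow_zero, mul_one, Nat.cast_zero, add_zero, zero_add,
      integral_pow] at hpos ⊢
    rw [betaFn_comm 1]
    field_simp
    simp
  | succ n ih =>
    have hrec := integral_pow_mul_one_sub_pow_succ m n x
    have hB := betaFn_natCast_add_two m n
    have hpos := betaFn_natCast_add_one_pos m (n + 1)
    rw [ih] at hrec
    rw [Finset.sum_range_succ, betaFn_comm (1 + _)]
    push_cast at hpos ⊢
    rw [show (1:ℝ) + (n + 1) = n + 1 + 1 by ring]
    set S := ∑ i ∈ Finset.range (n + 1),
      x ^ (m + 1) * (1 - x) ^ i / (((m:ℝ) + 1 + i) * betaFn (1 + i) (m + 1))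
    have hmn : ((m:ℝ) + n + 2) ≠ 0 := by positivity
    field_simp
    linear_combination hrec - S * hB

theorem betaCdf_natCast_add_one (m n : ℕ) (x : ℝ) :
    betaCdf (m + 1) (n + 1) x = ∑ i ∈ Finset.range (n + 1),
      x ^ (m + 1) * (1 - x) ^ i / (((m:ℝ) + 1 + i) * betaFn (1 + i) (m + 1)) := by
  simp only [betaCdf, add_sub_cancel_right, rpow_natCast]
  rw [integral_pow_mul_one_sub_pow_eq_sum,
    mul_div_cancel_left₀ _ (betaFn_natCast_add_one_pos m n).ne']

theorem integral_betaPdf_natCast_add_one_mul_pow_mul_one_sub_pow (a b p q : ℕ) :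
    ∫ x in (0:ℝ)..1, betaPdf (a + 1) (b + 1) x * (x ^ p * (1 - x) ^ q) =
      betaFn (b + q + 1) (a + p + 1) / betaFn (a + 1) (b + 1) := by
  simp only [betaPdf, add_sub_cancel_right, rpow_natCast]
  have h : ∀ x : ℝ, x ^ a * (1 - x) ^ b / betaFn (a + 1) (b + 1) * (x ^ p * (1 - x) ^ q) =
      x ^ (a + p) * (1 - x) ^ (b + q) / betaFn (a + 1) (b + 1) := fun x => by ring
  simp only [h, intervalIntegral.integral_div]
  rw [betaFn_comm (b + q + 1), show (a:ℝ) + p + 1 = (a + p : ℕ) + 1 by push_cast; ring,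
    show (b:ℝ) + q + 1 = (b + q : ℕ) + 1 by push_cast; ring,
    ← betaFn_natCast_add_one (a + p) (b + q)]

/-- Closed-form series for the probability that a Beta(α₁,β₁) sample exceeds a
Beta(α₂,β₂) sample, for positive integer parameters (sum over `i < β₂`). -/
theorem probG_sum_formula_beta (a₁ b₁ a₂ b₂ : ℕ)
    (hα₁ : 0 < a₁) (hβ₁ : 0 < b₁) (hα₂ : 0 < a₂) (hβ₂ : 0 < b₂) :
    probG (a₁ : ℝ) (b₁ : ℝ) (a₂ : ℝ) (b₂ : ℝ) =
      ∑ i ∈ Finset.range b₂,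
        betaFn ((b₁ : ℝ) + i) ((a₁ : ℝ) + a₂) /
          (((a₂ : ℝ) + i) * betaFn (1 + (i : ℝ)) (a₂ : ℝ) * betaFn (a₁ : ℝ) (b₁ : ℝ)) := by
  obtain ⟨a, rfl⟩ := Nat.exists_eq_add_one_of_ne_zero hα₁.ne'
  obtain ⟨b, rfl⟩ := Nat.exists_eq_add_one_of_ne_zero hβ₁.ne'
  obtain ⟨c, rfl⟩ := Nat.exists_eq_add_one_of_ne_zero hα₂.ne'
  obtain ⟨d, rfl⟩ := Nat.exists_eq_add_one_of_ne_zero hβ₂.ne'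
  push_cast
  simp only [probG, betaCdf_natCast_add_one, Finset.mul_sum, ← mul_div_assoc]
  rw [intervalIntegral.integral_finsetSum]
  · refine Finset.sum_congr rfl fun i _ => ?_
    rw [intervalIntegral.integral_div, integral_betaPdf_natCast_add_one_mul_pow_mul_one_sub_pow]
    push_cast
    rw [div_div, mul_comm (betaFn _ _)]
    ring_nf
  · intro i _
    simp only [betaPdf, add_sub_cancel_right, rpow_natCast]
    exact (by fun_prop : Continuous _).intervalIntegrable _ _
end
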